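/- For the polynomial map F : ℂ² → ℂ² defined by F(x₁,x₂) = ((x₁x₂)², (x₁x₂)³ + x₁), the asymptotic set S_F equals the cuspidal cubic { (α₁, α₂) ∈ ℂ² : α₁³ = α₂² }, i.e., the set { (α², α³) : α ∈ ℂ }. -/

import Mathlib

/-!
Along a sequence `ξ = (x₁, x₂)` escaping to infinity with `F ξ → a`, the product `u = x₁ x₂` stays
bounded because `u² → a₁`, hence so does `x₁ = F₂ ξ - u³`. Therefore `‖x₂‖ → ∞` and `x₁ = u / x₂ → 0`,
so `u³ → a₂` and `a₁³ = lim u⁶ = a₂²`. Conversely, `(α / k, k)` lies on the hyperbola `x₁ x₂ = α`,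
where `F = (α², α³ + x₁) → (α², α³)`.
-/

open Filter Topology

/-- The asymptotic set of a map `F : ℂ² → ℂ²`. -/
def asymptoticSet (F : ℂ × ℂ → ℂ × ℂ) : Set (ℂ × ℂ) :=
  {a | ∃ ξ : ℕ → ℂ × ℂ,
    Tendsto (fun k => ‖ξ k‖) atTop atTop ∧ Tendsto (fun k => F (ξ k)) atTop (𝓝 a)}

open Asymptotics

theorem setOf_pow_three_eq_sq {K : Type*} [Field K] :
    {a : K × K | a.1 ^ 3 = a.2 ^ 2} = {a : K × K | ∃ α : K, a = (α ^ 2, α ^ 3)} := by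
  ext ⟨x, y⟩
  simp only [Set.mem_ofPred_eq, Prod.mk.injEq]
  constructor
  · intro h
    rcases eq_or_ne x 0 with rfl | hx
    · have hy : y = 0 := pow_eq_zero_iff two_ne_zero |>.1 (by simpa using h.symm)
      exact ⟨0, by simp, by simp [hy]⟩
    · refine ⟨y / x, ?_, ?_⟩ <;> field_simp
      · linear_combination h
      · linear_combination y * h
  · rintro ⟨α, rfl, rfl⟩
    ring

variable {ι : Type*} {l : Filter ι}

theorem isBigO_one_of_tendsto_sq {𝕜 : Type*} [NormedDivisionRing 𝕜] {u : ι → 𝕜} {a : 𝕜}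
    (h : Tendsto (fun k => u k ^ 2) l (𝓝 a)) : u =O[l] fun _ => (1 : ℝ) := by
  obtain ⟨C, hC⟩ := (isBigO_one_iff ℝ).1 (h.isBigO_one ℝ)
  refine (isBigO_one_iff ℝ).2 ⟨1 + C, eventually_map.2 ((eventually_map.1 hC).mono fun k hk => ?_)⟩
  simp only [norm_pow] at hk
  nlinarith [sq_nonneg (‖u k‖ - 1)]

theorem tendsto_norm_snd_atTop {E F : Type*} [SeminormedAddGroup E] [SeminormedAddGroup F]
    {ξ : ι → E × F} (hξ : Tendsto (fun k => ‖ξ k‖) l atTop)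
    (h₁ : (fun k => (ξ k).1) =O[l] fun _ => (1 : ℝ)) :
    Tendsto (fun k => ‖(ξ k).2‖) l atTop := by
  obtain ⟨C, hC⟩ := (isBigO_one_iff ℝ).1 h₁
  refine tendsto_atTop_mono' l ((eventually_map.1 hC).mono fun k hk => ?_)
    (tendsto_atTop_add_const_right l (-C) hξ)
  have := (Prod.norm_def (ξ k)).trans_le (max_le_add_of_nonneg (norm_nonneg _) (norm_nonneg _))
  simp only at hk
  linarith

theorem fst_pow_three_eq_snd_sq_of_tendsto {𝕜 : Type*} [NormedField 𝕜] [l.NeBot]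
    {ξ : ι → 𝕜 × 𝕜} {a : 𝕜 × 𝕜} (hξ : Tendsto (fun k => ‖ξ k‖) l atTop)
    (hF : Tendsto (fun k => (((ξ k).1 * (ξ k).2) ^ 2, ((ξ k).1 * (ξ k).2) ^ 3 + (ξ k).1)) l
      (𝓝 a)) :
    a.1 ^ 3 = a.2 ^ 2 := by
  set u := fun k => (ξ k).1 * (ξ k).2
  have hu_sq : Tendsto (fun k => u k ^ 2) l (𝓝 a.1) := hF.fst_nhds
  have hu_bdd := isBigO_one_of_tendsto_sq hu_sq
  -- `x₁ = F₂ - u³` is bounded, so the whole of `‖ξ‖ → ∞` is carried by `x₂`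
  have hx₁_bdd : (fun k => (ξ k).1) =O[l] fun _ => (1 : ℝ) := by
    have hu_cube_bdd : (fun k => u k ^ 3) =O[l] fun _ => (1 : ℝ) := by simpa using hu_bdd.pow 3
    simpa [u] using (hF.snd_nhds.isBigO_one ℝ).sub hu_cube_bdd
  have hx₂ := tendsto_norm_snd_atTop hξ hx₁_bdd
  have hx₂_inv : Tendsto (fun k => (ξ k).2⁻¹) l (𝓝 0) :=
    tendsto_inv₀_cobounded.comp (tendsto_norm_atTop_iff_cobounded.1 hx₂)
  have hx₁ : Tendsto (fun k => (ξ k).1) l (𝓝 0) := by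
    refine (hx₂_inv.zero_mul_isBoundedUnder_le ((isBigO_one_iff ℝ).1 hu_bdd)).congr' ?_
    filter_upwards [hx₂.eventually_gt_atTop 0] with k hk
    field_simp [norm_pos_iff.1 hk]
    ring
  have hu_cube : Tendsto (fun k => u k ^ 3) l (𝓝 a.2) := by
    simpa using hF.snd_nhds.sub hx₁
  exact tendsto_nhds_unique ((hu_sq.pow 3).congr fun k => by ring) (hu_cube.pow 2)

theorem pow_mem_asymptoticSet (α : ℂ) :
    (α ^ 2, α ^ 3) ∈
      asymptoticSet (fun x : ℂ × ℂ => ((x.1 * x.2) ^ 2, (x.1 * x.2) ^ 3 + x.1)) := by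
  refine ⟨fun k : ℕ => (α / k, k), ?_, ?_⟩
  · refine tendsto_atTop_mono (fun k => ?_) tendsto_natCast_atTop_atTop
    exact (Complex.norm_natCast k).symm.le.trans (norm_snd_le ((α / k, k) : ℂ × ℂ))
  · have h : Tendsto (fun k : ℕ => (α ^ 2, α ^ 3 + α / k)) atTop (𝓝 (α ^ 2, α ^ 3)) := by
      simpa using tendsto_const_nhds.prodMk_nhds
        (tendsto_const_nhds.add (tendsto_const_div_atTop_nhds_zero_nat α))
    refine h.congr' ?_
    filter_upwards [eventually_ne_atTop 0] with k hk
    simp [hk]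

theorem stmt_5 :
    asymptoticSet (fun x : ℂ × ℂ => ((x.1 * x.2) ^ 2, (x.1 * x.2) ^ 3 + x.1)) =
      {a : ℂ × ℂ | a.1 ^ 3 = a.2 ^ 2} ∧
    {a : ℂ × ℂ | a.1 ^ 3 = a.2 ^ 2} = {a : ℂ × ℂ | ∃ α : ℂ, a = (α ^ 2, α ^ 3)} := by
  refine ⟨Set.Subset.antisymm ?_ ?_, setOf_pow_three_eq_sq⟩
  · rintro a ⟨ξ, hξ, hF⟩
    exact fst_pow_three_eq_snd_sq_of_tendsto hξ hF
  · rw [setOf_pow_three_eq_sq]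
    rintro _ ⟨α, rfl⟩
    exact pow_mem_asymptoticSet α
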